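/- arXiv:0810.0223 — 3 statements merged into one kernel-verified Lean document; each statement's English description precedes it below -/
import Mathlib

section
/- Every nonzero ideal of A is isomorphic, as an A-module, to a fat ideal: for every nonzero ideal F of A there exist an ideal F' of A whose contraction to R is nonzero and an A-module isomorphism F ≅ F'. -/
open Polynomial

set_option synthInstance.maxHeartbeats 1000000
set_option maxHeartbeats 4000000

/-- The subalgebra `A ≅ ⊕ₙ Lⁿ` of `K[ξ]` attached to a fractional ideal `L` of the
Dedekind domain `R`: polynomials whose `n`-th coefficient lies in `Lⁿ`.  This is the
coordinate ring of the total space of the line bundle on `Spec R` determined by `L`. -/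
noncomputable def lineBundleAlgebra (R : Type*) [CommRing R] [IsDomain R] [IsDedekindDomain R]
    (K : Type*) [Field K] [Algebra R K] [IsFractionRing R K]
    (L : FractionalIdeal (nonZeroDivisors R) K) : Subalgebra R (Polynomial K) where
  carrier := {p : Polynomial K | ∀ n : ℕ, p.coeff n ∈ L ^ n}
  zero_mem' := by
    intro n
    rw [Polynomial.coeff_zero, ← FractionalIdeal.mem_coe]
    exact Submodule.zero_mem _
  add_mem' := by
    intro p q hp hq n
    rw [Polynomial.coeff_add, ← FractionalIdeal.mem_coe]
    exact Submodule.add_mem _ ((FractionalIdeal.mem_coe).mpr (hp n))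
      ((FractionalIdeal.mem_coe).mpr (hq n))
  one_mem' := by
    intro n
    rw [Polynomial.coeff_one]
    split_ifs with h
    · subst h
      rw [pow_zero]
      exact (FractionalIdeal.mem_one_iff _).mpr ⟨1, map_one _⟩
    · rw [← FractionalIdeal.mem_coe]; exact Submodule.zero_mem _
  mul_mem' := by
    intro p q hp hq n
    rw [Polynomial.coeff_mul, ← FractionalIdeal.mem_coe]
    refine Submodule.sum_mem _ fun c hc => ?_
    rw [FractionalIdeal.mem_coe]
    have hcc : c.1 + c.2 = n := Finset.HasAntidiagonal.mem_antidiagonal.mp hc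
    have := FractionalIdeal.mul_mem_mul (hp c.1) (hq c.2)
    rwa [← pow_add, hcc] at this
  algebraMap_mem' := by
    intro r n
    rw [Polynomial.algebraMap_apply, Polynomial.coeff_C]
    split_ifs with h
    · subst h
      rw [pow_zero]
      exact (FractionalIdeal.mem_one_iff _).mpr ⟨r, rfl⟩
    · rw [← FractionalIdeal.mem_coe]; exact Submodule.zero_mem _

/-!
Every polynomial in `K[ξ]` lands in `A` after multiplication by a nonzero constant of `R`
(`A` contains `R`, and `rξ` for any nonzero `r ∈ R ∩ L`). Hence the ideal `F·K[ξ]` of the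
principal ideal domain `K[ξ]` has a generator `f₀` lying in `F`, and `f₀` divides every element
of `F` in `K[ξ]`. Since `A` is generated over `R` by `L·ξ`, it is noetherian, so finitely many
quotients `f / f₀` are cleared by a single nonzero `c ∈ R`: `c F ⊆ f₀ A`. Then the ideal
`F' = (c F : f₀)` satisfies `f₀ F' = c F ≅ F` and contains `c`.
-/

open scoped Pointwise

namespace Ideal

variable {A : Type*} [CommRing A]

theorem smul_colon_singleton_eq {I : Ideal A} {b : A} (h : I ≤ span {b}) :
    b • I.colon {b} = I := by
  refine le_antisymm ?_ fun x hx => ?_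
  · rintro _ ⟨y, hy, rfl⟩
    simpa [mul_comm] using Submodule.mem_colon_singleton.mp hy
  · obtain ⟨y, rfl⟩ := mem_span_singleton'.mp (h hx)
    exact ⟨y, Submodule.mem_colon_singleton.mpr (by simpa [mul_comm] using hx), mul_comm _ _⟩

theorem nonempty_linearEquiv_of_smul_eq [IsDomain A] {I J : Ideal A} {a b : A}
    (ha : a ≠ 0) (hb : b ≠ 0) (h : a • I = b • J) : Nonempty (I ≃ₗ[A] J) :=
  ⟨(Submodule.equivMapOfInjective _ (mul_right_injective₀ ha) I).trans
    ((LinearEquiv.ofEq _ _ h).trans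
      (Submodule.equivMapOfInjective _ (mul_right_injective₀ hb) J).symm)⟩

end Ideal

theorem Polynomial.monomial_mem_adjoin_monomial_one_image {R A : Type*} [CommSemiring R]
    [Semiring A] [Algebra R A] {T : Set A} {n : ℕ} {t : A} (ht : t ∈ Submodule.span R T ^ n) :
    monomial n t ∈ Algebra.adjoin R (monomial 1 '' T) := by
  set S := Algebra.adjoin R (monomial 1 '' T)
  let M : ℕ → Submodule R A := fun n => S.toSubmodule.comap ((monomial n).restrictScalars R)
  suffices ∀ n, Submodule.span R T ^ n ≤ M n from this n ht
  have hT : Submodule.span R T ≤ M 1 :=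
    Submodule.span_le.mpr fun z hz => Algebra.subset_adjoin ⟨z, hz, rfl⟩
  intro n
  induction n with
  | zero =>
    rintro _ ⟨r, rfl⟩
    simpa [M] using S.smul_mem S.one_mem r
  | succ n ih =>
    refine pow_succ (Submodule.span R T) n ▸ Submodule.mul_le.mpr fun x hx y hy => ?_
    have hxy : monomial n x * monomial 1 y ∈ S := S.mul_mem (ih hx) (hT hy)
    simpa [M, monomial_mul_monomial] using hxy

namespace lineBundleAlgebra

variable {R : Type*} [CommRing R] [IsDomain R] [IsDedekindDomain R]
  {K : Type*} [Field K] [Algebra R K] [IsFractionRing R K]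
  {L : FractionalIdeal (nonZeroDivisors R) K}

theorem monomial_mem {n : ℕ} {t : K} (ht : t ∈ L ^ n) :
    monomial n t ∈ lineBundleAlgebra R K L := by
  intro m
  rw [coeff_monomial]
  split_ifs with h
  · exact h ▸ ht
  · exact (L ^ m).zero_mem

theorem fg : (lineBundleAlgebra R K L).FG := by
  classical
  obtain ⟨T, hT⟩ := FractionalIdeal.fg_of_isNoetherianRing le_rfl L
  refine ⟨T.image (monomial 1), le_antisymm ?_ fun p hp => ?_⟩ <;> rw [Finset.coe_image]
  · refine Algebra.adjoin_le ?_
    rintro _ ⟨t, ht, rfl⟩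
    refine monomial_mem ?_
    rw [pow_one, ← FractionalIdeal.mem_coe, ← hT]
    exact Submodule.subset_span ht
  · rw [p.as_sum_support]
    refine Subalgebra.sum_mem _ fun n _ => ?_
    refine monomial_mem_adjoin_monomial_one_image ?_
    rw [hT, ← FractionalIdeal.coe_pow]
    exact hp n

instance : IsNoetherianRing (lineBundleAlgebra R K L) :=
  have := (Subalgebra.fg_iff_finiteType _).mp (fg (L := L))
  Algebra.FiniteType.isNoetherianRing R _

theorem coe_algebraMap (c : R) :
    ((algebraMap R (lineBundleAlgebra R K L) c : lineBundleAlgebra R K L) : K[X]) =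
      C (algebraMap R K c) :=
  rfl

theorem C_algebraMap_mem (r : R) : C (algebraMap R K r) ∈ lineBundleAlgebra R K L :=
  coe_algebraMap (L := L) r ▸ (algebraMap R (lineBundleAlgebra R K L) r).2

theorem exists_C_mul_mem (hL : L ≠ 0) (q : K[X]) :
    ∃ c : R, c ≠ 0 ∧ C (algebraMap R K c) * q ∈ lineBundleAlgebra R K L := by
  induction q using Polynomial.induction_on' with
  | add p q hp hq =>
    obtain ⟨c₁, hc₁, hp⟩ := hp
    obtain ⟨c₂, hc₂, hq⟩ := hq
    refine ⟨c₁ * c₂, mul_ne_zero hc₁ hc₂, ?_⟩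
    have : C (algebraMap R K (c₁ * c₂)) * (p + q) =
        C (algebraMap R K c₂) * (C (algebraMap R K c₁) * p) +
          C (algebraMap R K c₁) * (C (algebraMap R K c₂) * q) := by
      simp only [map_mul]; ring
    rw [this]
    exact add_mem (mul_mem (C_algebraMap_mem c₂) hp) (mul_mem (C_algebraMap_mem c₁) hq)
  | monomial n x =>
    obtain ⟨r, hr, hrL⟩ := FractionalIdeal.exists_ne_zero_mem_isInteger hL
    obtain ⟨d, a, ha⟩ := IsLocalization.exists_integer_multiple (nonZeroDivisors R) x
    refine ⟨d * r ^ n, mul_ne_zero (nonZeroDivisors.ne_zero d.2) (pow_ne_zero n hr), ?_⟩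
    -- `r ∈ L` makes `r X` an element of `A`, and `d` clears the denominator of `x`
    have : C (algebraMap R K (d * r ^ n)) * monomial n x =
        C (algebraMap R K a) * monomial 1 (algebraMap R K r) ^ n := by
      rw [monomial_pow, one_mul, C_mul_monomial, C_mul_monomial, ha, Algebra.smul_def]
      congr 1
      simp only [map_mul, map_pow]
      ring
    rw [this]
    exact mul_mem (C_algebraMap_mem a) (pow_mem (monomial_mem (by rwa [pow_one])) n)

theorem exists_C_mul_mem_of_finset (hL : L ≠ 0) (s : Finset K[X]) :
    ∃ c : R, c ≠ 0 ∧ ∀ q ∈ s, C (algebraMap R K c) * q ∈ lineBundleAlgebra R K L := by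
  classical
  induction s using Finset.induction_on with
  | empty => exact ⟨1, one_ne_zero, by simp⟩
  | insert q s _ ih =>
    obtain ⟨c₁, hc₁, hs⟩ := ih
    obtain ⟨c₂, hc₂, hq⟩ := exists_C_mul_mem hL q
    refine ⟨c₁ * c₂, mul_ne_zero hc₁ hc₂,
      (Finset.forall_mem_insert _ _ _).mpr ⟨?_, fun p hp => ?_⟩⟩
    · simpa [mul_assoc, mul_left_comm] using mul_mem (C_algebraMap_mem c₁) hq
    · simpa [mul_assoc, mul_left_comm] using mul_mem (C_algebraMap_mem c₂) (hs p hp)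

theorem exists_C_mul_mem_of_mem_map (hL : L ≠ 0) {F : Ideal (lineBundleAlgebra R K L)}
    {q : K[X]} (hq : q ∈ F.map (lineBundleAlgebra R K L).val) :
    ∃ c : R, c ≠ 0 ∧ ∃ f ∈ F, C (algebraMap R K c) * q = f := by
  induction hq using Submodule.span_induction with
  | mem x hx =>
    obtain ⟨f, hf, rfl⟩ := hx
    exact ⟨1, one_ne_zero, f, hf, by simp⟩
  | zero => exact ⟨1, one_ne_zero, 0, F.zero_mem, by simp⟩
  | add x y _ _ hx hy =>
    obtain ⟨c₁, hc₁, f₁, hf₁, hx⟩ := hx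
    obtain ⟨c₂, hc₂, f₂, hf₂, hy⟩ := hy
    refine ⟨c₁ * c₂, mul_ne_zero hc₁ hc₂,
      algebraMap R _ c₂ * f₁ + algebraMap R _ c₁ * f₂,
      F.add_mem (F.mul_mem_left _ hf₁) (F.mul_mem_left _ hf₂), ?_⟩
    simp only [Subalgebra.coe_add, Subalgebra.coe_mul, coe_algebraMap, ← hx, ← hy, map_mul]
    ring
  | smul a x _ hx =>
    obtain ⟨c, hc, f, hf, hx⟩ := hx
    obtain ⟨d, hd, ha⟩ := exists_C_mul_mem hL a
    refine ⟨d * c, mul_ne_zero hd hc, ⟨_, ha⟩ * f, F.mul_mem_left _ hf, ?_⟩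
    simp only [Subalgebra.coe_mul, ← hx, map_mul, smul_eq_mul]
    ring

theorem exists_mem_forall_dvd (hL : L ≠ 0) {F : Ideal (lineBundleAlgebra R K L)}
    (hF : F ≠ ⊥) :
    ∃ f₀ ∈ F, f₀ ≠ 0 ∧ ∀ f ∈ F, (f₀ : K[X]) ∣ f := by
  set g := Submodule.IsPrincipal.generator (F.map (lineBundleAlgebra R K L).val)
  have hg : ∀ f ∈ F, g ∣ (f : K[X]) := fun f hf =>
    (Submodule.IsPrincipal.mem_iff_generator_dvd _).mp (Ideal.mem_map_of_mem _ hf)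
  obtain ⟨c, hc, f₀, hf₀, hcg⟩ :=
    exists_C_mul_mem_of_mem_map hL (Submodule.IsPrincipal.generator_mem _)
  have hunit : IsUnit (C (algebraMap R K c)) :=
    isUnit_C.mpr ((map_ne_zero_iff _ (IsFractionRing.injective R K)).mpr hc).isUnit
  refine ⟨f₀, hf₀, ?_, fun f hf => hcg ▸ hunit.mul_left_dvd.mpr (hg f hf)⟩
  rintro rfl
  obtain ⟨f, hf, hf0⟩ := Submodule.exists_mem_ne_zero_of_ne_bot hF
  have hg0 : g = 0 := by simpa [hunit.ne_zero] using hcg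
  exact hf0 (Subtype.ext (zero_dvd_iff.mp (hg0 ▸ hg f hf)))

theorem exists_smul_le_span_singleton (hL : L ≠ 0) {F : Ideal (lineBundleAlgebra R K L)}
    {f₀ : lineBundleAlgebra R K L} (hdvd : ∀ f ∈ F, (f₀ : K[X]) ∣ f) :
    ∃ c : R, c ≠ 0 ∧ algebraMap R (lineBundleAlgebra R K L) c • F ≤ Ideal.span {f₀} := by
  classical
  obtain ⟨S, hS⟩ : F.FG := IsNoetherian.noetherian F
  choose! q hq using fun s (hs : s ∈ S) => hdvd s (hS ▸ Submodule.subset_span hs)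
  obtain ⟨c, hc, hcq⟩ := exists_C_mul_mem_of_finset hL (S.image q)
  refine ⟨c, hc, ?_⟩
  rw [← hS, Submodule.smul_span, Submodule.span_le]
  rintro _ ⟨s, hs, rfl⟩
  refine Ideal.mem_span_singleton.mpr
    ⟨⟨_, hcq _ (Finset.mem_image_of_mem q hs)⟩, Subtype.ext ?_⟩
  show C (algebraMap R K c) * (s : K[X]) = f₀ * (C (algebraMap R K c) * q s)
  rw [hq s hs]
  ring

end lineBundleAlgebra

/-- Every nonzero ideal of `A` is isomorphic, as an `A`-module, to a *fat*
ideal, i.e. one whose contraction to `R` is nonzero. -/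
theorem every_ideal_isomorphic_to_fat_ideal
    (R : Type*) [CommRing R] [IsDomain R] [IsDedekindDomain R]
    (K : Type*) [Field K] [Algebra R K] [IsFractionRing R K]
    (L : FractionalIdeal (nonZeroDivisors R) K) (hL : L ≠ 0)
    (A : Subalgebra R (Polynomial K)) (hA : A = lineBundleAlgebra R K L)
    (F : Ideal A) (hF : F ≠ ⊥) :
    ∃ F' : Ideal A, Ideal.comap (algebraMap R A) F' ≠ ⊥ ∧
      Nonempty (F ≃ₗ[A] F') := by
  subst hA
  obtain ⟨f₀, hf₀, hf₀0, hdvd⟩ := lineBundleAlgebra.exists_mem_forall_dvd hL hF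
  obtain ⟨c, hc, hle⟩ := lineBundleAlgebra.exists_smul_le_span_singleton hL hdvd
  have hc' : algebraMap R (lineBundleAlgebra R K L) c ≠ 0 := fun h => hc (by
    simpa [lineBundleAlgebra.coe_algebraMap] using congrArg Subtype.val h)
  refine ⟨(algebraMap R _ c • F).colon {f₀}, (Submodule.ne_bot_iff _).mpr ⟨c, ?_, hc⟩,
    Ideal.nonempty_linearEquiv_of_smul_eq hc' hf₀0 (Ideal.smul_colon_singleton_eq hle).symm⟩
  exact Ideal.mem_comap.mpr
    (Submodule.mem_colon_singleton.mpr (Submodule.smul_mem_pointwise_smul f₀ _ F hf₀))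
end

section
/- Let M be a module over a ring S, and let (M_k)_{k∈ℤ} and (M'_k)_{k∈ℤ} be two increasing families of submodules of M for which there exists n ∈ ℕ with M'_{k−n} ⊆ M_k ⊆ M'_{k+n} for all k ∈ ℤ. For each j ∈ ℤ define M^{(j)}_k := M_k + M'_{k−j}. Then: (a) for each j, the family (M^{(j)}_k)_{k∈ℤ} is increasing in k; (b) for all j and k one has M^{(j)}_{k−1} ⊆ M^{(j+1)}_k ⊆ M^{(j)}_k, i.e. consecutive families in the chain are adjacent; (c) M^{(j)}_k = M_k for all k whenever j ≥ n; (d) M^{(j)}_k = M'_{k−j} for all k whenever j ≤ −n. Thus any two such commensurable filtrations are connected by a finite chain of adjacent filtrations (up to a shift). -/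
/-- Any two commensurable increasing filtrations `(M_k)` and `(M'_k)` of a
module `M` over a ring `S` (commensurable: `M'_{k−n} ⊆ M_k ⊆ M'_{k+n}` for some `n`) are
connected by a chain of adjacent filtrations: setting `M^{(j)}_k := M_k + M'_{k−j}`, each
`M^{(j)}` is an increasing filtration, consecutive ones are adjacent
(`M^{(j)}_{k−1} ⊆ M^{(j+1)}_k ⊆ M^{(j)}_k`), `M^{(j)} = M` for `j ≥ n`, and
`M^{(j)}` is the `j`-shift of `M'` for `j ≤ −n`. -/
theorem chain_of_adjacent_filtrations
    (S : Type*) [Ring S] (M : Type*) [AddCommGroup M] [Module S M]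
    (Mf Mf' : ℤ → Submodule S M)
    (hMf : Monotone Mf) (hMf' : Monotone Mf')
    (n : ℕ) (hcomm : ∀ k : ℤ, Mf' (k - n) ≤ Mf k ∧ Mf k ≤ Mf' (k + n)) :
    (∀ j : ℤ, Monotone (fun k : ℤ => Mf k ⊔ Mf' (k - j))) ∧
    (∀ j k : ℤ,
      Mf (k - 1) ⊔ Mf' ((k - 1) - j) ≤ Mf k ⊔ Mf' (k - (j + 1)) ∧
      Mf k ⊔ Mf' (k - (j + 1)) ≤ Mf k ⊔ Mf' (k - j)) ∧
    (∀ j : ℤ, (n : ℤ) ≤ j → ∀ k : ℤ, Mf k ⊔ Mf' (k - j) = Mf k) ∧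
    (∀ j : ℤ, j ≤ -(n : ℤ) → ∀ k : ℤ, Mf k ⊔ Mf' (k - j) = Mf' (k - j)) := by
  refine ⟨?_, ?_, ?_, ?_⟩
  · intro j k l hkl
    exact sup_le_sup (hMf hkl) (hMf' (by omega))
  · intro j k
    constructor
    · exact sup_le_sup (hMf (by omega)) (hMf' (by omega))
    · exact sup_le_sup le_rfl (hMf' (by omega))
  · intro j hj k
    have h : Mf' (k - j) ≤ Mf k := le_trans (hMf' (by omega)) (hcomm k).1
    exact sup_eq_left.mpr h
  · intro j hj k
    have h : Mf k ≤ Mf' (k - j) := le_trans (hcomm k).2 (hMf' (by omega))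
    exact sup_eq_right.mpr h
end

section
/- Let k be a field, let R be a commutative k-algebra that is an integral domain, let f be a nonzero element of R, and let V be a k-linear subspace of R. Assume that R/V and R/fR are finite-dimensional over k. Then R/fV is finite-dimensional over k and dim_k(R/fV) = dim_k(R/V) + dim_k(R/fR), where fV denotes the image of V under multiplication by f. -/
/-- Let `k` be a field, `R` a commutative integral domain which is a
`k`-algebra, `f ∈ R` nonzero, and `V ⊆ R` a `k`-subspace.  If `R/V` and `R/fR` are
finite-dimensional over `k`, then so is `R/fV`, and
`dim_k(R/fV) = dim_k(R/V) + dim_k(R/fR)`. -/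
theorem codim_mul_subspace_eq_add
    (k : Type*) [Field k] (R : Type*) [CommRing R] [IsDomain R] [Algebra k R]
    (f : R) (hf : f ≠ 0) (V : Submodule k R)
    (hV : FiniteDimensional k (R ⧸ V))
    (hfR : FiniteDimensional k
      (R ⧸ (Submodule.restrictScalars k (Ideal.span {f} : Ideal R)))) :
    FiniteDimensional k (R ⧸ V.map (LinearMap.mulLeft k f)) ∧
      Module.finrank k (R ⧸ V.map (LinearMap.mulLeft k f)) =
        Module.finrank k (R ⧸ V) +
          Module.finrank k
            (R ⧸ (Submodule.restrictScalars k (Ideal.span {f} : Ideal R))) := by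
  set U := V.map (LinearMap.mulLeft k f) with hU
  set W := Submodule.restrictScalars k (Ideal.span {f} : Ideal R) with hW
  have hUW : U ≤ W := by
    rintro x ⟨v, hv, rfl⟩
    simp only [LinearMap.mulLeft_apply]
    exact Ideal.mem_span_singleton.2 ⟨v, rfl⟩
  -- the map r ↦ [f * r] in R ⧸ U
  set φ : R →ₗ[k] R ⧸ U := U.mkQ ∘ₗ LinearMap.mulLeft k f with hφ
  have hker : LinearMap.ker φ = V := by
    ext r
    simp only [hφ, LinearMap.mem_ker, LinearMap.comp_apply, LinearMap.mulLeft_apply,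
      Submodule.mkQ_apply, Submodule.Quotient.mk_eq_zero]
    constructor
    · rintro ⟨v, hv, hvr⟩
      simp only [LinearMap.mulLeft_apply] at hvr
      have : v = r := mul_left_cancel₀ hf hvr
      rwa [← this]
    · intro hr
      exact ⟨r, hr, rfl⟩
  have hrange : LinearMap.range φ = Submodule.map U.mkQ W := by
    ext x
    constructor
    · rintro ⟨r, rfl⟩
      exact ⟨f * r, Ideal.mem_span_singleton.2 ⟨r, rfl⟩, rfl⟩
    · rintro ⟨w, hw, rfl⟩
      obtain ⟨r, rfl⟩ := Ideal.mem_span_singleton.1 hw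
      exact ⟨r, rfl⟩
  -- R ⧸ V ≃ (image of W in R ⧸ U)
  have e1 : (R ⧸ V) ≃ₗ[k] Submodule.map U.mkQ W :=
    (Submodule.quotEquivOfEq V (LinearMap.ker φ) hker.symm).trans
      (φ.quotKerEquivRange.trans (LinearEquiv.ofEq _ _ hrange))
  -- ((R ⧸ U) ⧸ image of W) ≃ R ⧸ W
  have e2 : ((R ⧸ U) ⧸ Submodule.map U.mkQ W) ≃ₗ[k] R ⧸ W :=
    Submodule.quotientQuotientEquivQuotient U W hUW
  have h1 : FiniteDimensional k (Submodule.map U.mkQ W) := e1.finiteDimensional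
  have h2 : FiniteDimensional k ((R ⧸ U) ⧸ Submodule.map U.mkQ W) :=
    e2.symm.finiteDimensional
  have hfin : FiniteDimensional k (R ⧸ U) := by
    rw [show FiniteDimensional k (R ⧸ U) ↔ IsNoetherian k (R ⧸ U) from
      ⟨fun h => inferInstance, fun h => inferInstance⟩,
      isNoetherian_iff_submodule_quotient (Submodule.map U.mkQ W)]
    exact ⟨inferInstance, inferInstance⟩
  refine ⟨hfin, ?_⟩
  have hadd := Submodule.finrank_quotient_add_finrank (Submodule.map U.mkQ W)
  rw [e1.symm.finrank_eq, e2.finrank_eq] at hadd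
  omega
end
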